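/- arXiv:1708.02516 — 3 statements merged into one kernel-verified Lean document; each statement's English description precedes it below -/
import Mathlib

section
/- Let X be a first countable Hausdorff real topological vector space, μ a nonzero Borel measure on X that is finite on bounded sets, and K a bounded open neighbourhood of the origin. Let E ⊆ X be topologically dense in X and let u ∈ supp(μ) be an E-strong mode of μ. Then u is a strong mode of μ if and only if the coincident limiting ratios condition holds for u and E: lim_{r↓0} (sup_{z∈u−E} f(z,r)) / f(u,r) = lim_{r↓0} (sup_{z∈X} f(z,r)) / f(u,r). -/
/-!
For dense `E` pick `vₙ ∈ E` with `vₙ → 0`. As `K` is open, every point of `u + r • K` lies in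
`u - vₙ + r • K` for all large `n`, so continuity from below gives
`f(u, r) ≤ sup_{v ∈ E} f(u - v, r)`. Hence, for `r > 0`,
`1 ≤ sup_{v ∈ E} f(u - v, r) / f(u, r) ≤ sup_z f(z, r) / f(u, r)`, and since the middle ratio
has limsup at most `1`, both sides of the equivalence say that the right-hand ratio has limsup `1`.
-/

open MeasureTheory Filter Set Topology
open scoped ENNReal NNReal

/-- `fK μ K x r = μ(x + r • K)`, the mass of the scaled translated copy of `K`. -/
noncomputable def fK {X : Type*} [AddCommGroup X] [Module ℝ X] [MeasurableSpace X]
    (μ : Measure X) (K : Set X) (x : X) (r : ℝ) : ℝ≥0∞ :=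
  μ ((fun y => x + r • y) '' K)

/-- The topological support of a Borel measure. -/
def measSupport {X : Type*} [TopologicalSpace X] [MeasurableSpace X]
    (μ : Measure X) : Set X :=
  {x | ∀ U : Set X, IsOpen U → x ∈ U → 0 < μ U}

/-- `u` is a strong mode of `μ` (w.r.t. the reference neighbourhood `K`). -/
def IsStrongMode {X : Type*} [AddCommGroup X] [Module ℝ X] [TopologicalSpace X]
    [MeasurableSpace X] (μ : Measure X) (K : Set X) (u : X) : Prop :=
  Tendsto (fun r : ℝ => (⨆ z : X, fK μ K z r) / fK μ K u r) (𝓝[>] (0:ℝ)) (𝓝 1)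

/-- `u` is an `E`-strong mode of `μ`. -/
def IsEStrongMode {X : Type*} [AddCommGroup X] [Module ℝ X] [TopologicalSpace X]
    [MeasurableSpace X] (μ : Measure X) (K : Set X) (E : Set X) (u : X) : Prop :=
  u ∈ measSupport μ ∧
    limsup (fun r : ℝ => (⨆ v ∈ E, fK μ K (u - v) r) / fK μ K u r) (𝓝[>] (0:ℝ)) ≤ 1

/-- `u` is an `E`-weak mode of `μ`. -/
def IsEWeakMode {X : Type*} [AddCommGroup X] [Module ℝ X] [TopologicalSpace X]
    [MeasurableSpace X] (μ : Measure X) (K : Set X) (E : Set X) (u : X) : Prop :=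
  u ∈ measSupport μ ∧
    ∀ v ∈ E, limsup (fun r : ℝ => fK μ K (u - v) r / fK μ K u r) (𝓝[>] (0:ℝ)) ≤ 1

/-- The uniformity condition for the pair `(u, E)`. -/
def UniformityCondition {X : Type*} [AddCommGroup X] [Module ℝ X]
    [MeasurableSpace X] (μ : Measure X) (K : Set X) (E : Set X) (u : X) : Prop :=
  ∃ v ∈ E, ∃ rs : ℝ, rs ∈ Set.Ioo (0:ℝ) 1 ∧
    ∀ r ∈ Set.Ioo (0:ℝ) rs, fK μ K (u - v) r = ⨆ w ∈ E, fK μ K (u - w) r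

/-- The coincident limiting ratios condition for the pair `(u, E)`. -/
def CLRCondition {X : Type*} [AddCommGroup X] [Module ℝ X] [MeasurableSpace X]
    (μ : Measure X) (K : Set X) (E : Set X) (u : X) : Prop :=
  limsup (fun r : ℝ => (⨆ v ∈ E, fK μ K (u - v) r) / fK μ K u r) (𝓝[>] (0:ℝ)) =
    limsup (fun r : ℝ => (⨆ z : X, fK μ K z r) / fK μ K u r) (𝓝[>] (0:ℝ))

open scoped Pointwise

theorem tendsto_nhds_iff_limsup_eq_of_le_of_limsup_le {α β : Type*} [CompleteLinearOrder β]
    [TopologicalSpace β] [OrderTopology β] {l : Filter α} [l.NeBot] {f g : α → β} {a : β}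
    (haf : ∀ᶠ x in l, a ≤ f x) (hfg : f ≤ᶠ[l] g) (hf : limsup f l ≤ a) :
    Tendsto g l (𝓝 a) ↔ limsup f l = limsup g l := by
  have hag : ∀ᶠ x in l, a ≤ g x := (haf.and hfg).mono fun x hx => hx.1.trans hx.2
  rw [le_antisymm hf (le_limsup_of_frequently_le haf.frequently)]
  exact ⟨fun h => h.limsup_eq.symm,
    fun h => tendsto_of_le_liminf_of_limsup_le (le_liminf_of_le (by isBoundedDefault) hag) h.ge⟩

theorem MeasureTheory.measure_le_iSup_of_forall_eventually_mem {α : Type*} [MeasurableSpace α]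
    (μ : Measure α) {s : Set α} {t : ℕ → Set α} (h : ∀ x ∈ s, ∀ᶠ n in atTop, x ∈ t n) :
    μ s ≤ ⨆ n, μ (t n) := by
  have hs : s ⊆ ⋃ n, ⋂ m ≥ n, t m := fun x hx => by
    simpa using eventually_atTop.1 (h x hx)
  have hmono : Monotone fun n => ⋂ m ≥ n, t m := fun _ _ hab =>
    biInter_mono (Ici_subset_Ici.2 hab) fun _ _ => le_rfl
  calc μ s ≤ μ (⋃ n, ⋂ m ≥ n, t m) := measure_mono hs
    _ = ⨆ n, μ (⋂ m ≥ n, t m) := hmono.directed_le.measure_iUnion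
    _ ≤ ⨆ n, μ (t n) := iSup_mono fun n => measure_mono (iInter₂_subset n le_rfl)

section fK

variable {X : Type*} [AddCommGroup X] [Module ℝ X]

theorem image_add_smul_eq_vadd_smul (K : Set X) (x : X) (r : ℝ) :
    (fun y => x + r • y) '' K = x +ᵥ r • K := by
  rw [← image_smul, ← image_vadd, image_image]
  rfl

variable [TopologicalSpace X] {K : Set X}

theorem isOpen_image_add_smul [ContinuousAdd X] [ContinuousConstSMul ℝ X] (hK : IsOpen K)
    (x : X) {r : ℝ} (hr : r ≠ 0) : IsOpen ((fun y => x + r • y) '' K) := by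
  rw [image_add_smul_eq_vadd_smul]
  exact (hK.smul₀ hr).vadd x

theorem isVonNBounded_image_add_smul [IsTopologicalAddGroup X] [ContinuousSMul ℝ X]
    (hK : Bornology.IsVonNBounded ℝ K) (x : X) (r : ℝ) :
    Bornology.IsVonNBounded ℝ ((fun y => x + r • y) '' K) := by
  rw [image_add_smul_eq_vadd_smul, ← image_smul]
  exact (hK.image (σ := RingHom.id ℝ) (r • ContinuousLinearMap.id ℝ X)).vadd x

variable [MeasurableSpace X] {μ : Measure X}

theorem fK_pos_of_mem_measSupport [ContinuousAdd X] [ContinuousConstSMul ℝ X] (hK : IsOpen K)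
    (hK0 : (0 : X) ∈ K) {u : X} (hu : u ∈ measSupport μ) {r : ℝ} (hr : r ≠ 0) :
    0 < fK μ K u r :=
  hu _ (isOpen_image_add_smul hK u hr) ⟨0, hK0, by simp⟩

theorem fK_ne_top [IsTopologicalAddGroup X] [ContinuousSMul ℝ X]
    (hμ : ∀ s : Set X, Bornology.IsVonNBounded ℝ s → μ s ≠ ⊤)
    (hK : Bornology.IsVonNBounded ℝ K) (x : X) (r : ℝ) : fK μ K x r ≠ ⊤ :=
  hμ _ (isVonNBounded_image_add_smul hK x r)

theorem fK_le_iSup_sub_of_dense [FrechetUrysohnSpace X] [ContinuousAdd X]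
    [ContinuousConstSMul ℝ X] (hK : IsOpen K) {E : Set X} (hE : Dense E) (u : X) {r : ℝ}
    (hr : r ≠ 0) : fK μ K u r ≤ ⨆ v ∈ E, fK μ K (u - v) r := by
  obtain ⟨v, hvE, hv⟩ := mem_closure_iff_seq_limit.1 (hE (0 : X))
  calc fK μ K u r ≤ ⨆ n, fK μ K (u - v n) r := by
        refine measure_le_iSup_of_forall_eventually_mem μ ?_
        rintro _ ⟨k, hk, rfl⟩
        have hk' : Tendsto (fun n => k + r⁻¹ • v n) atTop (𝓝 k) := by
          simpa using tendsto_const_nhds.add (hv.const_smul r⁻¹)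
        filter_upwards [hk'.eventually (hK.mem_nhds hk)] with n hn
        -- `u + r • k = (u - v n) + r • (k + r⁻¹ • v n)`
        refine ⟨_, hn, ?_⟩
        simp only [smul_add, smul_inv_smul₀ hr]
        abel
    _ ≤ ⨆ v ∈ E, fK μ K (u - v) r := iSup_le fun n => le_iSup₂_of_le (v n) (hvE n) le_rfl

end fK

theorem strong_iff_CLR_of_dense_of_Estrong_general
    {X : Type*} [AddCommGroup X] [Module ℝ X] [TopologicalSpace X]
    [IsTopologicalAddGroup X] [ContinuousSMul ℝ X]
    [FirstCountableTopology X] [MeasurableSpace X]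
    (μ : Measure X)
    (hfin : ∀ s : Set X, Bornology.IsVonNBounded ℝ s → μ s ≠ ⊤)
    (K : Set X) (hKopen : IsOpen K) (hK0 : (0:X) ∈ K)
    (hKbdd : Bornology.IsVonNBounded ℝ K)
    (E : Set X) (hE : Dense E) (u : X)
    (hEstrong : IsEStrongMode μ K E u) :
    IsStrongMode μ K u ↔ CLRCondition μ K E u := by
  refine tendsto_nhds_iff_limsup_eq_of_le_of_limsup_le ?_ (.of_forall fun r => ?_) hEstrong.2
  · filter_upwards [self_mem_nhdsWithin] with r (hr : 0 < r)
    have hpos := fK_pos_of_mem_measSupport hKopen hK0 hEstrong.1 hr.ne'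
    rw [ENNReal.le_div_iff_mul_le (.inl hpos.ne') (.inl (fK_ne_top hfin hKbdd u r)), one_mul]
    exact fK_le_iSup_sub_of_dense hKopen hE u hr.ne'
  · exact ENNReal.div_le_div_right (iSup₂_le fun v _ => le_iSup (fK μ K · r) (u - v)) _

/-- Corollary 3.7. Let `E` be topologically dense in `X` and let
`u ∈ supp(μ)` be an `E`-strong mode. Then `u` is a strong mode if and only if the
coincident limiting ratios condition holds for `u` and `E`. -/
theorem strong_iff_CLR_of_dense_of_Estrong
    {X : Type*} [AddCommGroup X] [Module ℝ X] [TopologicalSpace X]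
    [IsTopologicalAddGroup X] [ContinuousSMul ℝ X] [T2Space X]
    [FirstCountableTopology X] [MeasurableSpace X] [BorelSpace X]
    (μ : Measure X) (hμ : μ ≠ 0)
    (hfin : ∀ s : Set X, Bornology.IsVonNBounded ℝ s → μ s ≠ ⊤)
    (K : Set X) (hKopen : IsOpen K) (hK0 : (0:X) ∈ K)
    (hKbdd : Bornology.IsVonNBounded ℝ K)
    (E : Set X) (hE : Dense E) (u : X) (hu : u ∈ measSupport μ)
    (hEstrong : IsEStrongMode μ K E u) :
    IsStrongMode μ K u ↔ CLRCondition μ K E u :=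
  strong_iff_CLR_of_dense_of_Estrong_general μ hfin K hKopen hK0 hKbdd E hE u hEstrong
end

section
/- Let X be a first countable Hausdorff real topological vector space, μ a σ-finite nonzero Borel measure on X that is finite on bounded sets, and K a bounded open neighbourhood of the origin. Let u ∈ supp(μ) and v ∈ X be such that the translated measure μ_v (defined by μ_v(A) := μ(A−v)) is absolutely continuous with respect to μ with a representative dμ_v/dμ of its Radon–Nikodym derivative that is continuous on some open neighbourhood of u, and suppose lim_{r↓0} f(u−v,r)/f(u,r) ≤ 1. Then lim_{r↓0} f(u−v,r)/f(u,r) = (dμ_v/dμ)(u). -/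
open MeasureTheory Filter Set Topology
open scoped ENNReal NNReal

/-!
Since `μ_v = g • μ`, the ratio `f(u - v, r) / f(u, r)` is the `μ`-average of `g` over the open
set `u + r • K`. These sets contain `u`, so they have positive mass (`u` is in the support), they
have finite mass (they are bounded), and they shrink to `u` as `r ↓ 0` (`K` is bounded). Averages
of `g` over such sets converge to `g u` by continuity of `g` at `u`; the argument runs in the
order topology of `ℝ≥0∞`, so it covers `g u = ∞` as well.
-/

open scoped Pointwise

lemma fK_eq_measure_vadd_smul_set {X : Type*} [AddCommGroup X] [Module ℝ X] [MeasurableSpace X]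
    (μ : Measure X) (K : Set X) (x : X) (r : ℝ) : fK μ K x r = μ (x +ᵥ r • K) := by
  rw [fK, ← image_vadd, ← image_smul, image_image]
  rfl

lemma preimage_add_const_vadd_set {G : Type*} [AddCommGroup G] (x v : G) (A : Set G) :
    (· + v) ⁻¹' (x +ᵥ A) = (x - v) +ᵥ A := by
  have : (· + v) = (v +ᵥ · : G → G) := funext fun y => add_comm y v
  rw [this, preimage_vadd, vadd_vadd, neg_add_eq_sub]

lemma Bornology.IsVonNBounded.smul_set {𝕜 E : Type*} [NormedField 𝕜] [AddCommGroup E]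
    [Module 𝕜 E] [TopologicalSpace E] [ContinuousSMul 𝕜 E] {s : Set E}
    (hs : Bornology.IsVonNBounded 𝕜 s) (c : 𝕜) : Bornology.IsVonNBounded 𝕜 (c • s) := by
  simpa [← image_smul] using hs.image (c • ContinuousLinearMap.id 𝕜 E)

lemma Bornology.IsVonNBounded.tendsto_vadd_smul_set_smallSets {𝕜 E : Type*}
    [NormedDivisionRing 𝕜] [AddCommGroup E] [Module 𝕜 E] [TopologicalSpace E]
    [ContinuousAdd E] {s : Set E} (hs : Bornology.IsVonNBounded 𝕜 s) (x : E) :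
    Tendsto (fun c : 𝕜 => x +ᵥ c • s) (𝓝 0) (𝓝 x).smallSets := by
  have hx : Tendsto (x +ᵥ · : E → E) (𝓝 0) (𝓝 x) := by
    simpa using (continuous_const_vadd x).tendsto (0 : E)
  simpa only [image_vadd, Function.comp_def] using hx.image_smallSets.comp hs.tendsto_smallSets_nhds

section SetLAverage

variable {α : Type*} [MeasurableSpace α] {μ : Measure α} {s : Set α} {f : α → ℝ≥0∞} {c : ℝ≥0∞}

lemma le_setLAverage_of_forall_le (hs : MeasurableSet s) (hs₀ : μ s ≠ 0) (hs_top : μ s ≠ ∞)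
    (h : ∀ x ∈ s, c ≤ f x) : c ≤ ⨍⁻ x in s, f x ∂μ :=
  calc c = ⨍⁻ _ in s, c ∂μ := (setLAverage_const hs₀ hs_top c).symm
    _ ≤ ⨍⁻ x in s, f x ∂μ := laverage_mono_ae (ae_restrict_of_forall_mem hs h)

lemma setLAverage_le_of_forall_le (hs : MeasurableSet s) (h : ∀ x ∈ s, f x ≤ c) :
    ⨍⁻ x in s, f x ∂μ ≤ c := by
  rw [setLAverage_eq]
  exact ENNReal.div_le_of_le_mul ((setLIntegral_mono' hs h).trans_eq (setLIntegral_const s c))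

theorem ContinuousAt.tendsto_setLAverage [TopologicalSpace α] {ι : Type*} {l : Filter ι}
    {S : ι → Set α} {x : α} (hf : ContinuousAt f x) (hS : Tendsto S l (𝓝 x).smallSets)
    (hS_meas : ∀ᶠ i in l, MeasurableSet (S i)) (hS₀ : ∀ᶠ i in l, μ (S i) ≠ 0)
    (hS_top : ∀ᶠ i in l, μ (S i) ≠ ∞) :
    Tendsto (fun i => ⨍⁻ y in S i, f y ∂μ) l (𝓝 (f x)) := by
  refine tendsto_order.2 ⟨fun a ha => ?_, fun b hb => ?_⟩
  · obtain ⟨c, hac, hc⟩ := exists_between ha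
    filter_upwards [hS.eventually (eventually_smallSets_subset.2 (hf (Ioi_mem_nhds hc))),
      hS_meas, hS₀, hS_top] with i hsub hmeas h₀ htop
    exact hac.trans_le (le_setLAverage_of_forall_le hmeas h₀ htop fun y hy => (hsub hy).le)
  · obtain ⟨c, hc, hcb⟩ := exists_between hb
    filter_upwards [hS.eventually (eventually_smallSets_subset.2 (hf (Iio_mem_nhds hc))),
      hS_meas] with i hsub hmeas
    exact (setLAverage_le_of_forall_le hmeas fun y hy => (hsub hy).le).trans_lt hcb

end SetLAverage

section ShiftedRatio

variable {X : Type*} [AddCommGroup X] [Module ℝ X] [MeasurableSpace X] [MeasurableAdd X]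
  (μ : Measure X) (K : Set X)

lemma fK_sub_eq_map_add_const (x v : X) (r : ℝ) :
    fK μ K (x - v) r = μ.map (· + v) (x +ᵥ r • K) := by
  rw [← MeasurableEquiv.coe_addRight, MeasurableEquiv.map_apply, MeasurableEquiv.coe_addRight,
    preimage_add_const_vadd_set, fK_eq_measure_vadd_smul_set]

lemma fK_sub_div_fK_eq_setLAverage {x v : X} {r : ℝ} {g : X → ℝ≥0∞}
    (hg : μ.map (· + v) = μ.withDensity g) (hS : MeasurableSet (x +ᵥ r • K)) :
    fK μ K (x - v) r / fK μ K x r = ⨍⁻ y in x +ᵥ r • K, g y ∂μ := by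
  rw [fK_sub_eq_map_add_const, hg, withDensity_apply _ hS, fK_eq_measure_vadd_smul_set,
    setLAverage_eq]

end ShiftedRatio

theorem limiting_ratio_eq_density_general
    {X : Type*} [AddCommGroup X] [Module ℝ X] [TopologicalSpace X]
    [IsTopologicalAddGroup X] [ContinuousSMul ℝ X]
    [MeasurableSpace X] [BorelSpace X]
    (μ : Measure X)
    (hfin : ∀ s : Set X, Bornology.IsVonNBounded ℝ s → μ s ≠ ⊤)
    (K : Set X) (hKopen : IsOpen K) (hK0 : (0:X) ∈ K)
    (hKbdd : Bornology.IsVonNBounded ℝ K)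
    (u : X) (hu : u ∈ measSupport μ) (v : X)
    (g : X → ℝ≥0∞)
    (hg : μ.map (· + v) = μ.withDensity g)
    (U : Set X) (hUopen : IsOpen U) (huU : u ∈ U) (hgcont : ContinuousOn g U) :
    Tendsto (fun r : ℝ => fK μ K (u - v) r / fK μ K u r) (𝓝[>] (0:ℝ)) (𝓝 (g u)) := by
  have hS_open : ∀ᶠ r in 𝓝[>] (0:ℝ), IsOpen (u +ᵥ r • K) :=
    eventually_mem_nhdsWithin.mono fun r hr => (hKopen.smul₀ hr.ne').vadd u
  have hu_mem (r : ℝ) : u ∈ u +ᵥ r • K := by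
    simpa using vadd_mem_vadd_set (a := u) (smul_mem_smul_set (a := r) hK0)
  refine Tendsto.congr' ?_ ((hgcont.continuousAt (hUopen.mem_nhds huU)).tendsto_setLAverage
    ((hKbdd.tendsto_vadd_smul_set_smallSets u).mono_left nhdsWithin_le_nhds)
    (hS_open.mono fun _ h => h.measurableSet)
    (hS_open.mono fun r h => (hu _ h (hu_mem r)).ne')
    (Eventually.of_forall fun r => hfin _ ((hKbdd.smul_set r).vadd u)))
  filter_upwards [hS_open] with r h
  exact (fK_sub_div_fK_eq_setLAverage μ K hg h.measurableSet).symm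

/-- Lemma 4.4. If `μ_v = μ.map (· + v)` is absolutely continuous
w.r.t. `μ` with a representative `g` of `dμ_v/dμ` continuous on an open neighbourhood
of `u ∈ supp(μ)`, and `lim_{r↓0} f(u−v,r)/f(u,r) ≤ 1`, then
`lim_{r↓0} f(u−v,r)/f(u,r) = g(u)`. -/
theorem limiting_ratio_eq_density
    {X : Type*} [AddCommGroup X] [Module ℝ X] [TopologicalSpace X]
    [IsTopologicalAddGroup X] [ContinuousSMul ℝ X] [T2Space X]
    [FirstCountableTopology X] [MeasurableSpace X] [BorelSpace X]
    (μ : Measure X) [SigmaFinite μ] (hμ : μ ≠ 0)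
    (hfin : ∀ s : Set X, Bornology.IsVonNBounded ℝ s → μ s ≠ ⊤)
    (K : Set X) (hKopen : IsOpen K) (hK0 : (0:X) ∈ K)
    (hKbdd : Bornology.IsVonNBounded ℝ K)
    (u : X) (hu : u ∈ measSupport μ) (v : X)
    (hac : μ.map (· + v) ≪ μ)
    (g : X → ℝ≥0∞) (hgmeas : Measurable g)
    (hg : μ.map (· + v) = μ.withDensity g)
    (U : Set X) (hUopen : IsOpen U) (huU : u ∈ U) (hgcont : ContinuousOn g U)
    (hle : limsup (fun r : ℝ => fK μ K (u - v) r / fK μ K u r) (𝓝[>] (0:ℝ)) ≤ 1) :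
    Tendsto (fun r : ℝ => fK μ K (u - v) r / fK μ K u r) (𝓝[>] (0:ℝ)) (𝓝 (g u)) :=
  limiting_ratio_eq_density_general μ hfin K hKopen hK0 hKbdd u hu v g hg U hUopen huU hgcont
end

section
/- Let X be a first countable Hausdorff complex topological vector space, μ a nonzero Borel measure on X that is finite on bounded sets, and K a bounded open neighbourhood of the origin. For x ∈ X and ρ ∈ ℂ\{0} write φ(x,ρ) := μ(x + ρ·K). Suppose E ⊆ X is topologically dense in X, u ∈ supp(μ), and there exist v* ∈ E and r* ∈ (0,1) such that φ(u−v*,ρ) = sup_{z∈u−E} φ(z,ρ) for all ρ ∈ ℂ with 0 < |ρ| < r*. Then u satisfies lim_{|ρ|→0} φ(u−v,ρ)/φ(u,ρ) ≤ 1 for every v ∈ E (i.e. u is an E-weak mode) if and only if lim_{|ρ|→0} (sup_{z∈X} φ(z,ρ)) / φ(u,ρ) = 1 (i.e. u is a strong mode). -/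
open MeasureTheory Filter Set Topology
open scoped ENNReal NNReal

/-- `phiK μ K x ρ = μ(x + ρ • K)` for a complex scaling factor `ρ`. -/
noncomputable def phiK {X : Type*} [AddCommGroup X] [Module ℂ X] [MeasurableSpace X]
    (μ : Measure X) (K : Set X) (x : X) (ρ : ℂ) : ℝ≥0∞ :=
  μ ((fun y => x + ρ • y) '' K)

/-- The topological support of a Borel measure. -/
def measSupportC {X : Type*} [TopologicalSpace X] [MeasurableSpace X]
    (μ : Measure X) : Set X :=
  {x | ∀ U : Set X, IsOpen U → x ∈ U → 0 < μ U}

/-!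
For `ρ ≠ 0` the set `ρ • K` is open, and for an open set `U` the map `x ↦ μ(x + U)` is lower
semicontinuous: continuity from below along a countable neighbourhood basis of `x` shows that
`μ(y + U)` cannot drop much for `y` near `x`. The supremum of a lower semicontinuous function over
the dense set `u - E` is therefore its supremum over all of `X`, so the uniformity hypothesis says
that `φ(u - v*, ρ) = sup_z φ(z, ρ)` for small `ρ`. A weak mode then has
`limsup sup_z φ(z, ρ) / φ(u, ρ) ≤ 1`, while this ratio is always at least `1` because
`0 < φ(u, ρ) < ∞`; the converse is monotonicity of `limsup`.
-/

open scoped Pointwise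

theorem lowerSemicontinuous_measure_vadd {G : Type*} [AddGroup G] [TopologicalSpace G]
    [IsTopologicalAddGroup G] [FirstCountableTopology G] [MeasurableSpace G]
    (μ : Measure G) {U : Set G} (hU : IsOpen U) :
    LowerSemicontinuous fun x : G => μ (x +ᵥ U) := by
  intro x c hc
  obtain ⟨V, hV⟩ := (𝓝 x).exists_antitone_basis
  set A : ℕ → Set G := fun n => ⋂ y ∈ V n, y +ᵥ U
  have hA : Monotone A := fun m n hmn => biInter_mono (hV.antitone hmn) fun _ _ => Subset.rfl
  have hcover : x +ᵥ U ⊆ ⋃ n, A n := by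
    rintro _ ⟨v, hv, rfl⟩
    have hnear : ∀ᶠ y in 𝓝 x, -y + (x + v) ∈ U :=
      ((continuous_neg.add continuous_const).tendsto x).eventually
        (hU.mem_nhds (by simpa using hv))
    obtain ⟨n, -, hn⟩ := hV.toHasBasis.eventually_iff.mp hnear
    exact mem_iUnion.2 ⟨n, mem_iInter₂.2 fun y hy => ⟨_, hn hy, by simp [vadd_eq_add]⟩⟩
  obtain ⟨n, hn⟩ : ∃ n, c < μ (A n) :=
    lt_iSup_iff.mp (hc.trans_le ((measure_mono hcover).trans_eq hA.measure_iUnion))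
  filter_upwards [hV.mem n] with y hy
  exact hn.trans_le (measure_mono (biInter_subset_of_mem hy))

theorem Dense.biSup_eq_iSup_of_lowerSemicontinuous {α β : Type*} [TopologicalSpace α]
    [CompleteLinearOrder β] {f : α → β} (hf : LowerSemicontinuous f) {s : Set α}
    (hs : Dense s) : ⨆ x ∈ s, f x = ⨆ x, f x := by
  refine le_antisymm (iSup₂_le fun x _ => le_iSup f x)
    (iSup_le fun x => le_of_forall_lt fun c hc => ?_)
  obtain ⟨y, hcy, hys⟩ :=
    ((hf x c hc).and_frequently (mem_closure_iff_frequently.mp (hs x))).exists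
  exact hcy.trans_le (le_iSup₂ (f := fun y _ => f y) y hys)

section phiK

variable {X : Type*} [AddCommGroup X] [Module ℂ X] [MeasurableSpace X]
  (μ : Measure X) {K : Set X}

theorem phiK_eq_measure_vadd_smul (K : Set X) (x : X) (ρ : ℂ) :
    phiK μ K x ρ = μ (x +ᵥ ρ • K) := by
  rw [phiK, ← image_smul, ← image_vadd, image_image]
  rfl

variable [TopologicalSpace X] [IsTopologicalAddGroup X] [ContinuousConstSMul ℂ X] {ρ : ℂ}

theorem phiK_pos {u : X} (hu : u ∈ measSupportC μ) (hK : IsOpen K) (hK0 : (0 : X) ∈ K)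
    (hρ : ρ ≠ 0) : 0 < phiK μ K u ρ := by
  rw [phiK_eq_measure_vadd_smul]
  refine hu _ ((hK.smul₀ hρ).vadd u) ⟨0, ?_, add_zero u⟩
  simpa using smul_mem_smul_set (a := ρ) hK0

theorem phiK_ne_top [ContinuousSMul ℂ X]
    (hfin : ∀ s : Set X, Bornology.IsVonNBounded ℂ s → μ s ≠ ⊤)
    (hK : Bornology.IsVonNBounded ℂ K) (x : X) (ρ : ℂ) : phiK μ K x ρ ≠ ⊤ := by
  rw [phiK_eq_measure_vadd_smul]
  refine hfin _ (Bornology.IsVonNBounded.vadd ?_ x)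
  simpa using hK.image (ρ • ContinuousLinearMap.id ℂ X)

variable [FirstCountableTopology X]

theorem lowerSemicontinuous_phiK (hK : IsOpen K) (hρ : ρ ≠ 0) :
    LowerSemicontinuous fun x => phiK μ K x ρ := by
  simpa only [phiK_eq_measure_vadd_smul] using
    lowerSemicontinuous_measure_vadd μ (hK.smul₀ hρ)

theorem iSup_phiK_eq_biSup_sub (hK : IsOpen K) {E : Set X} (hE : Dense E) (u : X)
    (hρ : ρ ≠ 0) : ⨆ z, phiK μ K z ρ = ⨆ w ∈ E, phiK μ K (u - w) ρ := by
  calc ⨆ z, phiK μ K z ρ = ⨆ w, phiK μ K (u - w) ρ :=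
        ((Equiv.subLeft u).surjective.iSup_comp fun z => phiK μ K z ρ).symm
    _ = ⨆ w ∈ E, phiK μ K (u - w) ρ :=
        (hE.biSup_eq_iSup_of_lowerSemicontinuous
          ((lowerSemicontinuous_phiK μ hK hρ).comp (continuous_const.sub continuous_id))).symm

end phiK

theorem Eweak_iff_strong_complex_general
    {X : Type*} [AddCommGroup X] [Module ℂ X] [TopologicalSpace X]
    [IsTopologicalAddGroup X] [ContinuousSMul ℂ X]
    [FirstCountableTopology X] [MeasurableSpace X]
    (μ : Measure X)
    (hfin : ∀ s : Set X, Bornology.IsVonNBounded ℂ s → μ s ≠ ⊤)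
    (K : Set X) (hKopen : IsOpen K) (hK0 : (0:X) ∈ K)
    (hKbdd : Bornology.IsVonNBounded ℂ K)
    (E : Set X) (hE : Dense E) (u : X) (hu : u ∈ measSupportC μ)
    (hunif : ∃ v ∈ E, ∃ rs : ℝ, rs ∈ Set.Ioo (0:ℝ) 1 ∧
      ∀ ρ : ℂ, 0 < ‖ρ‖ → ‖ρ‖ < rs →
        phiK μ K (u - v) ρ = ⨆ w ∈ E, phiK μ K (u - w) ρ) :
    (∀ v ∈ E, limsup (fun ρ : ℂ => phiK μ K (u - v) ρ / phiK μ K u ρ) (𝓝[≠] (0:ℂ)) ≤ 1)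
      ↔ Tendsto (fun ρ : ℂ => (⨆ z : X, phiK μ K z ρ) / phiK μ K u ρ)
          (𝓝[≠] (0:ℂ)) (𝓝 1) := by
  obtain ⟨v₀, hv₀, r, ⟨hr, -⟩, hv₀_max⟩ := hunif
  have hratio_ge : ∀ᶠ ρ in 𝓝[≠] (0:ℂ), 1 ≤ (⨆ z, phiK μ K z ρ) / phiK μ K u ρ := by
    filter_upwards [self_mem_nhdsWithin] with ρ hρ
    rw [← ENNReal.div_self (phiK_pos μ hu hKopen hK0 hρ).ne' (phiK_ne_top μ hfin hKbdd u ρ)]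
    exact ENNReal.div_le_div_right (le_iSup (fun z => phiK μ K z ρ) u) _
  have hratio_eq : (fun ρ => (⨆ z, phiK μ K z ρ) / phiK μ K u ρ)
      =ᶠ[𝓝[≠] (0:ℂ)] fun ρ => phiK μ K (u - v₀) ρ / phiK μ K u ρ := by
    filter_upwards [self_mem_nhdsWithin,
      nhdsWithin_le_nhds (tendsto_norm_zero.eventually (eventually_lt_nhds hr))] with ρ hρ hρr
    rw [iSup_phiK_eq_biSup_sub μ hKopen hE u hρ, hv₀_max ρ (norm_pos_iff.mpr hρ) hρr]
  constructor
  · intro hweak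
    exact tendsto_of_le_liminf_of_limsup_le (le_liminf_of_le (by isBoundedDefault) hratio_ge)
      ((limsup_congr hratio_eq).trans_le (hweak v₀ hv₀))
  · intro hstrong v _
    refine (limsup_le_limsup (Eventually.of_forall fun ρ => ?_)).trans_eq hstrong.limsup_eq
    exact ENNReal.div_le_div_right (le_iSup (fun z => phiK μ K z ρ) (u - v)) _

/-- Theorem 5.2. Complex scaling factors: if `E` is topologically
dense in `X`, `u ∈ supp(μ)`, and the `ℂ`-uniformity condition holds, then `u` is an
`E`-weak mode (w.r.t. limits as `|ρ| → 0`, `ρ ≠ 0`) if and only if `u` is a strong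
mode. -/
theorem Eweak_iff_strong_complex
    {X : Type*} [AddCommGroup X] [Module ℂ X] [TopologicalSpace X]
    [IsTopologicalAddGroup X] [ContinuousSMul ℂ X] [T2Space X]
    [FirstCountableTopology X] [MeasurableSpace X] [BorelSpace X]
    (μ : Measure X) (hμ : μ ≠ 0)
    (hfin : ∀ s : Set X, Bornology.IsVonNBounded ℂ s → μ s ≠ ⊤)
    (K : Set X) (hKopen : IsOpen K) (hK0 : (0:X) ∈ K)
    (hKbdd : Bornology.IsVonNBounded ℂ K)
    (E : Set X) (hE : Dense E) (u : X) (hu : u ∈ measSupportC μ)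
    (hunif : ∃ v ∈ E, ∃ rs : ℝ, rs ∈ Set.Ioo (0:ℝ) 1 ∧
      ∀ ρ : ℂ, 0 < ‖ρ‖ → ‖ρ‖ < rs →
        phiK μ K (u - v) ρ = ⨆ w ∈ E, phiK μ K (u - w) ρ) :
    (∀ v ∈ E, limsup (fun ρ : ℂ => phiK μ K (u - v) ρ / phiK μ K u ρ) (𝓝[≠] (0:ℂ)) ≤ 1)
      ↔ Tendsto (fun ρ : ℂ => (⨆ z : X, phiK μ K z ρ) / phiK μ K u ρ)
          (𝓝[≠] (0:ℂ)) (𝓝 1) :=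
  Eweak_iff_strong_complex_general μ hfin K hKopen hK0 hKbdd E hE u hu hunif
end
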